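/- In any Hamiltonian cycle of the Möbius ladder M4 that contains exactly two rungs, the two missing rungs are separated by paths of three horizontal edges on each side; equivalently the two rungs contained in the cycle are consecutive. -/

import Mathlib

open SimpleGraph

/-- The Möbius ladder on 8 vertices: cycle edges `{i, i+1}` and rungs `{i, i+4}`. -/
def M4 : SimpleGraph (Fin 8) :=
  SimpleGraph.fromRel (fun i j => j = i + 1 ∨ j = i + 4)

/-- An edge of `M4` is a rung if it has the form `{i, i+4}`. -/
def IsRung (e : Sym2 (Fin 8)) : Prop := ∃ i : Fin 8, e = s(i, i + 4)

/-- An edge of `M4` is horizontal if it has the form `{i, i+1}`. -/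
def IsHorizontal (e : Sym2 (Fin 8)) : Prop := ∃ i : Fin 8, e = s(i, i + 1)

/-- `E` is the edge set of a Hamiltonian cycle of `M4`. -/
def IsHamEdgeSet (E : Set (Sym2 (Fin 8))) : Prop :=
  ∃ (v : Fin 8) (w : M4.Walk v v), w.IsHamiltonianCycle ∧ E = {e | e ∈ w.edges}

/- ### Auxiliary machinery -/

open Fin.NatCast

instance : DecidablePred IsRung := fun e => by unfold IsRung; infer_instance

instance : DecidableRel M4.Adj := fun x y =>
  decidable_of_iff (x ≠ y ∧ (y = x + 1 ∨ y = x + 4 ∨ x = y + 1 ∨ x = y + 4)) (by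
    rw [M4, SimpleGraph.fromRel_adj]; tauto)

/-- index k < 8 : horizontal edge s(k,k+1); 8 ≤ k < 12 : rung s(k-8,k-4). -/
def edg (k : ℕ) : Sym2 (Fin 8) :=
  if k < 8 then s((k : Fin 8), (k : Fin 8) + 1)
  else s(((k - 8 : ℕ) : Fin 8), ((k - 8 : ℕ) : Fin 8) + 4)

def touches (v k : ℕ) : Bool :=
  if k < 8 then v == k || v == (k + 1) % 8 else v == k - 8 || v == k - 4

abbrev P (S : Finset ℕ) : Prop := S.card = 8 →
    (∀ v ∈ Finset.range 8, 2 ≤ (S.filter (fun k => touches v k)).card) →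
    (S.filter (fun k => 8 ≤ k)).card = 2 →
    ∃ i ∈ Finset.range 4, (S.filter (fun k => 8 ≤ k)) = {8 + i, 8 + (i + 1) % 4} ∧
      (∀ j ∈ Finset.range 8, j ≠ i → j ≠ (i + 4) % 8 → j ∈ S)

set_option maxHeartbeats 400000000 in
set_option maxRecDepth 20000 in
lemma keyidx : ∀ A ∈ (Finset.range 4).powerset, ∀ B ∈ (Finset.range 8).powerset,
    P (B ∪ A.image (· + 8)) := by decide

lemma edg_inj : ∀ k1 ∈ Finset.range 12, ∀ k2 ∈ Finset.range 12, edg k1 = edg k2 → k1 = k2 := by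
  decide

lemma edg_cover : ∀ x y : Fin 8, M4.Adj x y → ∃ k ∈ Finset.range 12, s(x, y) = edg k := by decide

lemma edg_touch : ∀ v : Fin 8, ∀ k ∈ Finset.range 12, (v ∈ edg k ↔ touches v.val k = true) := by
  decide

lemma edg_rung : ∀ k ∈ Finset.range 12, (IsRung (edg k) ↔ 8 ≤ k) := by decide

abbrev OK (i j : ℕ) (e : Sym2 (Fin 8)) : Prop :=
  j ∈ Finset.range 8 ∧ j ≠ i ∧ j ≠ (i + 4) % 8 ∧ edg j = e

lemma concl_facts : ∀ i ∈ Finset.range 4,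
    edg (8 + i) = s((i : Fin 8), (i : Fin 8) + 4) ∧
    edg (8 + (i + 1) % 4) = s((i : Fin 8) + 1, (i : Fin 8) + 5) ∧
    OK i (i + 1) (s((i : Fin 8) + 1, (i : Fin 8) + 2)) ∧
    OK i (i + 2) (s((i : Fin 8) + 2, (i : Fin 8) + 3)) ∧
    OK i (i + 3) (s((i : Fin 8) + 3, (i : Fin 8) + 4)) ∧
    OK i ((i + 5) % 8) (s((i : Fin 8) + 5, (i : Fin 8) + 6)) ∧
    OK i ((i + 6) % 8) (s((i : Fin 8) + 6, (i : Fin 8) + 7)) ∧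
    OK i ((i + 7) % 8) (s((i : Fin 8) + 7, (i : Fin 8))) := by decide

/-- In a cycle the base point lies on two distinct edges. -/
lemma two_incident {V : Type*} {G : SimpleGraph V} {v : V} (w : G.Walk v v)
    (hw : w.IsCycle) :
    ∃ e1 e2, e1 ≠ e2 ∧ e1 ∈ w.edges ∧ e2 ∈ w.edges ∧ v ∈ e1 ∧ v ∈ e2 := by
  have h3 := hw.three_le_length
  have hlen : w.darts.length = w.length := SimpleGraph.Walk.length_darts w
  have hnodup : w.edges.Nodup := hw.isCircuit.isTrail.edges_nodup
  have hedges : w.edges = w.darts.map SimpleGraph.Dart.edge := rfl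
  have hne : w.darts ≠ [] := by intro h; rw [h] at hlen; simp at hlen; omega
  have hfst : (w.darts.head hne).toProd.1 = v := by simp
  have hsnd : (w.darts.getLast hne).toProd.2 = v := by simp
  rcases hd : w.darts with _ | ⟨d, ds⟩
  · exact absurd hd hne
  rcases hds : ds with _ | ⟨d2, ds2⟩
  · rw [hd, hds] at hlen; simp at hlen; omega
  subst hds
  simp only [hd, List.head_cons] at hfst
  have hgl : w.darts.getLast hne = (d2 :: ds2).getLast (by simp) := by
    simp only [hd]
    exact List.getLast_cons (by simp)
  have hglmem : w.darts.getLast hne ∈ d2 :: ds2 := by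
    rw [hgl]; exact List.getLast_mem _
  refine ⟨d.edge, (w.darts.getLast hne).edge, ?_, ?_, ?_, ?_, ?_⟩
  · rw [hedges, hd] at hnodup
    simp only [List.map_cons, List.nodup_cons] at hnodup
    intro hcon
    exact hnodup.1 (hcon ▸ List.mem_map_of_mem hglmem)
  · rw [hedges, hd]; simp
  · rw [hedges]; exact List.mem_map_of_mem (List.getLast_mem hne)
  · show v ∈ s(d.toProd.1, d.toProd.2)
    rw [hfst]; exact Sym2.mem_mk_left _ _
  · show v ∈ s((w.darts.getLast hne).toProd.1, (w.darts.getLast hne).toProd.2)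
    rw [hsnd]; exact Sym2.mem_mk_right _ _

/-- In any Hamiltonian cycle of `M4` with exactly two rungs, the two rungs contained in
the cycle are consecutive, and they are separated by two paths of three horizontal
edges each. -/
theorem ham_cycle_two_rungs_structure
    (E : Set (Sym2 (Fin 8))) (hE : IsHamEdgeSet E)
    (h2 : {e ∈ E | IsRung e}.ncard = 2) :
    ∃ i : Fin 8, {e ∈ E | IsRung e} = {s(i, i + 4), s(i + 1, i + 5)} ∧
      s(i + 1, i + 2) ∈ E ∧ s(i + 2, i + 3) ∈ E ∧ s(i + 3, i + 4) ∈ E ∧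
      s(i + 5, i + 6) ∈ E ∧ s(i + 6, i + 7) ∈ E ∧ s(i + 7, i) ∈ E := by
  obtain ⟨v, w, hham, hEdef⟩ := hE
  classical
  set F : Finset (Sym2 (Fin 8)) := w.edges.toFinset with hFdef
  have hEF : ∀ e, e ∈ E ↔ e ∈ F := by
    intro e; rw [hEdef]; simp [hFdef]
  -- every edge of F is some edg k
  have hsub : ∀ e ∈ F, ∃ k ∈ Finset.range 12, e = edg k := by
    intro e he
    have heG : e ∈ M4.edgeSet := w.edges_subset_edgeSet (by simpa [hFdef] using he)
    induction e using Sym2.ind with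
    | _ x y => exact edg_cover x y ((SimpleGraph.mem_edgeSet M4).mp heG)
  set S : Finset ℕ := (Finset.range 12).filter (fun k => edg k ∈ F) with hSdef
  have hSsub : S ⊆ Finset.range 12 := Finset.filter_subset _ _
  have hSF : ∀ k ∈ S, edg k ∈ F := fun k hk => (Finset.mem_filter.mp hk).2
  have hFimage : F = S.image edg := by
    ext e
    constructor
    · intro he
      obtain ⟨k, hk, rfl⟩ := hsub e he
      exact Finset.mem_image_of_mem _ (Finset.mem_filter.mpr ⟨hk, he⟩)
    · intro he
      obtain ⟨k, hk, rfl⟩ := Finset.mem_image.mp he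
      exact hSF k hk
  have hinjS : Set.InjOn edg S := fun a ha b hb hab =>
    edg_inj a (hSsub ha) b (hSsub hb) hab
  have hFcard : F.card = 8 := by
    have hnodup := hham.isCycle.isCircuit.isTrail.edges_nodup
    rw [hFdef, List.toFinset_card_of_nodup hnodup, SimpleGraph.Walk.length_edges,
      hham.length_eq, Fintype.card_fin]
  have hScard : S.card = 8 := by
    rw [← hFcard, hFimage, Finset.card_image_of_injOn hinjS]
  -- degree condition
  have hdeg : ∀ vn ∈ Finset.range 8, 2 ≤ (S.filter (fun k => touches vn k)).card := by
    intro vn hvn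
    set u : Fin 8 := ⟨vn, Finset.mem_range.mp hvn⟩ with hu
    have hmemsup : u ∈ w.support := hham.mem_support u
    obtain ⟨e1, e2, hne12, he1, he2, hu1, hu2⟩ :=
      two_incident (w.rotate u hmemsup) (hham.isCycle.rotate hmemsup)
    have hrot : ∀ e : Sym2 (Fin 8), e ∈ (w.rotate u hmemsup).edges ↔ e ∈ w.edges :=
      fun e => (w.rotate_edges u hmemsup).mem_iff
    have he1F : e1 ∈ F := by rw [hFdef, List.mem_toFinset]; exact (hrot e1).mp he1
    have he2F : e2 ∈ F := by rw [hFdef, List.mem_toFinset]; exact (hrot e2).mp he2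
    obtain ⟨k1, hk1, rfl⟩ := hsub e1 he1F
    obtain ⟨k2, hk2, rfl⟩ := hsub e2 he2F
    have hk1S : k1 ∈ S.filter (fun k => touches vn k) := by
      refine Finset.mem_filter.mpr ⟨Finset.mem_filter.mpr ⟨hk1, he1F⟩, ?_⟩
      have := (edg_touch u k1 hk1).mp hu1
      simpa [hu] using this
    have hk2S : k2 ∈ S.filter (fun k => touches vn k) := by
      refine Finset.mem_filter.mpr ⟨Finset.mem_filter.mpr ⟨hk2, he2F⟩, ?_⟩
      have := (edg_touch u k2 hk2).mp hu2
      simpa [hu] using this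
    have hk12 : k1 ≠ k2 := fun h => hne12 (by rw [h])
    exact Finset.one_lt_card.mpr ⟨k1, hk1S, k2, hk2S, hk12⟩
  -- rung condition
  have hFRimage : F.filter IsRung = (S.filter (fun k => 8 ≤ k)).image edg := by
    ext e
    constructor
    · intro he
      obtain ⟨heF, heR⟩ := Finset.mem_filter.mp he
      obtain ⟨k, hk, rfl⟩ := hsub e heF
      refine Finset.mem_image_of_mem _ (Finset.mem_filter.mpr
        ⟨Finset.mem_filter.mpr ⟨hk, heF⟩, (edg_rung k hk).mp heR⟩)
    · intro he
      obtain ⟨k, hk, rfl⟩ := Finset.mem_image.mp he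
      obtain ⟨hkS, hk8⟩ := Finset.mem_filter.mp hk
      exact Finset.mem_filter.mpr ⟨hSF k hkS, (edg_rung k (hSsub hkS)).mpr hk8⟩
  have hsetF : {e ∈ E | IsRung e} = ↑(F.filter IsRung) := by
    ext e; simp [Set.mem_setOf_eq, hEF e, Finset.mem_filter]
  have hFRcard : (F.filter IsRung).card = 2 := by
    rw [← Set.ncard_coe_finset, ← hsetF]; exact h2
  have hSRcard : (S.filter (fun k => 8 ≤ k)).card = 2 := by
    have : ((S.filter (fun k => 8 ≤ k)).image edg).card = (S.filter (fun k => 8 ≤ k)).card :=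
      Finset.card_image_of_injOn (fun a ha b hb hab =>
        edg_inj a (hSsub (Finset.filter_subset _ _ ha)) b (hSsub (Finset.filter_subset _ _ hb)) hab)
    rw [← this, ← hFRimage]; exact hFRcard
  -- decompose S for keyidx
  set B : Finset ℕ := (Finset.range 8).filter (fun k => edg k ∈ F) with hBdef
  set A : Finset ℕ := (Finset.range 4).filter (fun a => edg (a + 8) ∈ F) with hAdef
  have hSBA : S = B ∪ A.image (· + 8) := by
    ext k
    simp only [hSdef, hBdef, hAdef, Finset.mem_union, Finset.mem_filter, Finset.mem_image,
      Finset.mem_range]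
    constructor
    · rintro ⟨hk12, hkF⟩
      by_cases h8 : k < 8
      · exact Or.inl ⟨h8, hkF⟩
      · refine Or.inr ⟨k - 8, ⟨⟨by omega, ?_⟩, by omega⟩⟩
        rwa [(by omega : k - 8 + 8 = k)]
    · rintro (⟨h8, hkF⟩ | ⟨a, ⟨⟨ha4, haF⟩, rfl⟩⟩)
      · exact ⟨by omega, hkF⟩
      · exact ⟨by omega, haF⟩
  have hkey := keyidx A (Finset.mem_powerset.mpr (Finset.filter_subset _ _))
    B (Finset.mem_powerset.mpr (Finset.filter_subset _ _))
  rw [← hSBA] at hkey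
  obtain ⟨i, hi4, hfilt, hmem⟩ := hkey hScard hdeg hSRcard
  obtain ⟨hr1, hr2, ho1, ho2, ho3, ho4, ho5, ho6⟩ := concl_facts i hi4
  refine ⟨(i : Fin 8), ?_, ?_, ?_, ?_, ?_, ?_, ?_⟩
  · -- the rung set
    have hpair : F.filter IsRung = {s((i : Fin 8), (i : Fin 8) + 4),
        s((i : Fin 8) + 1, (i : Fin 8) + 5)} := by
      rw [hFRimage, hfilt]
      rw [Finset.image_insert, Finset.image_singleton, hr1, hr2]
    rw [hsetF, hpair]
    simp
  all_goals {
    first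
    | (obtain ⟨hj8, hji, hji4, hje⟩ := ho1
       rw [hEF, ← hje]; exact hSF _ (hmem _ hj8 hji hji4))
    | (obtain ⟨hj8, hji, hji4, hje⟩ := ho2
       rw [hEF, ← hje]; exact hSF _ (hmem _ hj8 hji hji4))
    | (obtain ⟨hj8, hji, hji4, hje⟩ := ho3
       rw [hEF, ← hje]; exact hSF _ (hmem _ hj8 hji hji4))
    | (obtain ⟨hj8, hji, hji4, hje⟩ := ho4
       rw [hEF, ← hje]; exact hSF _ (hmem _ hj8 hji hji4))
    | (obtain ⟨hj8, hji, hji4, hje⟩ := ho5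
       rw [hEF, ← hje]; exact hSF _ (hmem _ hj8 hji hji4))
    | (obtain ⟨hj8, hji, hji4, hje⟩ := ho6
       rw [hEF, ← hje]; exact hSF _ (hmem _ hj8 hji hji4))
  }
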